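/- arXiv:1104.4587 — 3 statements merged into one kernel-verified Lean document; each statement's English description precedes it below -/
import Mathlib

section
/- Let A be a d×d complex matrix and write A = H + iK with H = (A + A*)/2 and K = (A − A*)/(2i) hermitian. Then the polar of the numerical range W(A) equals {ξ + iη : ξ, η ∈ ℝ, and I − ξH − ηK is positive semidefinite}. -/
open Matrix
open scoped ComplexOrder

/-- The numerical range of a `d × d` complex matrix `A`:
`W(A) = {⟨Ax, x⟩ : ‖x‖ = 1}`, where `⟨Ax, x⟩ = x* A x`. -/
def numericalRange {d : ℕ} (A : Matrix (Fin d) (Fin d) ℂ) : Set ℂ :=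
  {z | ∃ x : Fin d → ℂ, star x ⬝ᵥ x = 1 ∧ star x ⬝ᵥ A.mulVec x = z}

/-- The polar of a subset of `ℂ` (identifying `ℂ` with `ℝ²` via the real
inner product `⟨z, w⟩ = Re(z̄ w)`). -/
def polarSet (S : Set ℂ) : Set ℂ :=
  {z | ∀ w ∈ S, ((starRingEnd ℂ) z * w).re ≤ 1}

/-
For a unit vector `x` with `w = x* A x`, the hermitian parts give `x* H x = Re w` and
`x* K x = Im w`, so `x* (I - ξH - ηK) x = 1 - Re(conj(ξ + iη) w)`. Hence `ξ + iη` lies in the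
polar of `W(A)` exactly when the hermitian matrix `I - ξH - ηK` has a nonnegative quadratic form
on unit vectors, which by rescaling is positive semidefiniteness.
-/

open ComplexConjugate ComplexStarModule

section StarModule

variable {E : Type*} [AddCommGroup E] [Module ℂ E] [StarAddMonoid E] [StarModule ℂ E]

lemma realPart_coe_eq_half_smul (a : E) : (ℜ a : E) = (1 / 2 : ℂ) • (a + star a) := by
  rw [realPart_apply_coe, one_div, ← Complex.ofReal_ofNat, ← Complex.ofReal_inv, Complex.coe_smul]

lemma imaginaryPart_coe_eq_smul (a : E) :
    (ℑ a : E) = (1 / (2 * Complex.I)) • (a - star a) := by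
  rw [imaginaryPart_apply_coe, ← Complex.coe_smul, smul_smul, one_div, mul_inv, Complex.inv_I]
  push_cast
  ring_nf

end StarModule

namespace Matrix

variable {n : Type*}

lemma isHermitian_one_sub_smul_realPart_sub_smul_imaginaryPart [DecidableEq n] (A : Matrix n n ℂ)
    (ξ η : ℝ) :
    (1 - (ξ : ℂ) • (ℜ A : Matrix n n ℂ) - (η : ℂ) • (ℑ A : Matrix n n ℂ)).IsHermitian :=
  (isHermitian_one.sub (IsSelfAdjoint.smul (Complex.conj_ofReal ξ) (ℜ A).prop)).sub
    (IsSelfAdjoint.smul (Complex.conj_ofReal η) (ℑ A).prop)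

variable [Fintype n]

lemma star_dotProduct_conjTranspose_mulVec {R : Type*} [CommSemiring R] [StarRing R]
    (A : Matrix n n R) (x : n → R) :
    star x ⬝ᵥ Aᴴ *ᵥ x = star (star x ⬝ᵥ A *ᵥ x) := by
  rw [star_dotProduct, star_mulVec, conjTranspose_conjTranspose, ← dotProduct_mulVec]

lemma star_smul_dotProduct_mulVec_smul {𝕜 : Type*} [RCLike 𝕜] (M : Matrix n n 𝕜) (c : ℝ)
    (x : n → 𝕜) : star (c • x) ⬝ᵥ M *ᵥ (c • x) = c ^ 2 • (star x ⬝ᵥ M *ᵥ x) := by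
  rw [star_smul, star_trivial, mulVec_smul, smul_dotProduct, dotProduct_smul, smul_smul, sq]

lemma posSemidef_iff_forall_dotProduct_self_eq_one {𝕜 : Type*} [RCLike 𝕜] {M : Matrix n n 𝕜}
    (hM : M.IsHermitian) :
    M.PosSemidef ↔ ∀ x, star x ⬝ᵥ x = 1 → 0 ≤ star x ⬝ᵥ M *ᵥ x := by
  refine ⟨fun h x _ ↦ h.dotProduct_mulVec_nonneg x,
    fun h ↦ .of_dotProduct_mulVec_nonneg hM fun x ↦ ?_⟩
  rcases eq_or_ne x 0 with rfl | hx
  · simp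
  obtain ⟨t, ht, hxt⟩ := RCLike.pos_iff_exists_ofReal.1 (dotProduct_star_self_pos_iff.2 hx)
  set c : ℝ := (√t)⁻¹
  have hc : 0 < c ^ 2 := by positivity
  have hunit : star (c • x) ⬝ᵥ (c • x) = 1 := by
    rw [star_smul, star_trivial, smul_dotProduct, dotProduct_smul, smul_smul, ← hxt,
      RCLike.real_smul_eq_coe_mul, ← RCLike.ofReal_mul, ← sq, inv_pow, Real.sq_sqrt ht.le,
      inv_mul_cancel₀ ht.ne', RCLike.ofReal_one]
  have hscaled := h _ hunit
  rw [star_smul_dotProduct_mulVec_smul] at hscaled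
  rw [← inv_smul_smul₀ hc.ne' (star x ⬝ᵥ M *ᵥ x)]
  exact smul_nonneg (by positivity) hscaled

lemma star_dotProduct_realPart_mulVec (A : Matrix n n ℂ) (x : n → ℂ) :
    star x ⬝ᵥ (ℜ A : Matrix n n ℂ) *ᵥ x = (star x ⬝ᵥ A *ᵥ x).re := by
  rw [realPart_coe_eq_half_smul, smul_mulVec, add_mulVec, dotProduct_smul, dotProduct_add,
    star_eq_conjTranspose, star_dotProduct_conjTranspose_mulVec, Complex.re_eq_add_conj,
    Complex.star_def, smul_eq_mul]
  ring

lemma star_dotProduct_imaginaryPart_mulVec (A : Matrix n n ℂ) (x : n → ℂ) :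
    star x ⬝ᵥ (ℑ A : Matrix n n ℂ) *ᵥ x = (star x ⬝ᵥ A *ᵥ x).im := by
  rw [imaginaryPart_coe_eq_smul, smul_mulVec, sub_mulVec, dotProduct_smul, dotProduct_sub,
    star_eq_conjTranspose, star_dotProduct_conjTranspose_mulVec, Complex.im_eq_sub_conj,
    Complex.star_def, smul_eq_mul]
  ring

lemma star_dotProduct_one_sub_smul_realPart_sub_smul_imaginaryPart_mulVec [DecidableEq n]
    (A : Matrix n n ℂ) (z : ℂ) (x : n → ℂ) :
    star x ⬝ᵥ (1 - (z.re : ℂ) • (ℜ A : Matrix n n ℂ) - (z.im : ℂ) • (ℑ A : Matrix n n ℂ)) *ᵥ x =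
      star x ⬝ᵥ x - ((conj z * (star x ⬝ᵥ A *ᵥ x)).re : ℂ) := by
  rw [sub_mulVec, sub_mulVec, one_mulVec, smul_mulVec, smul_mulVec, dotProduct_sub,
    dotProduct_sub, dotProduct_smul, dotProduct_smul, star_dotProduct_realPart_mulVec,
    star_dotProduct_imaginaryPart_mulVec, Complex.mul_re, Complex.conj_re, Complex.conj_im]
  push_cast
  ring

end Matrix

theorem polar_numericalRange_eq_spectrahedron {d : ℕ} (A H K : Matrix (Fin d) (Fin d) ℂ)
    (hH : H = (1 / 2 : ℂ) • (A + Aᴴ)) (hK : K = (1 / (2 * Complex.I)) • (A - Aᴴ)) :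
    polarSet (numericalRange A) =
      {z : ℂ | ∃ ξ η : ℝ, z = (ξ : ℂ) + (η : ℂ) * Complex.I ∧
        ((1 : Matrix (Fin d) (Fin d) ℂ) - (ξ : ℂ) • H - (η : ℂ) • K).PosSemidef} := by
  subst hH hK
  rw [← star_eq_conjTranspose, ← realPart_coe_eq_half_smul, ← imaginaryPart_coe_eq_smul]
  ext z
  have hunit : ∀ x, star x ⬝ᵥ x = 1 →
      (0 ≤ star x ⬝ᵥ (1 - (z.re : ℂ) • (ℜ A : Matrix (Fin d) (Fin d) ℂ)
        - (z.im : ℂ) • (ℑ A : Matrix (Fin d) (Fin d) ℂ)) *ᵥ x ↔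
      (conj z * (star x ⬝ᵥ A *ᵥ x)).re ≤ 1) := by
    intro x hx
    rw [star_dotProduct_one_sub_smul_realPart_sub_smul_imaginaryPart_mulVec, hx, sub_nonneg]
    exact_mod_cast Iff.rfl
  constructor
  · intro hz
    refine ⟨z.re, z.im, (Complex.re_add_im z).symm, (posSemidef_iff_forall_dotProduct_self_eq_one
      (isHermitian_one_sub_smul_realPart_sub_smul_imaginaryPart A _ _)).2 fun x hx ↦ ?_⟩
    exact (hunit x hx).2 (hz _ ⟨x, hx, rfl⟩)
  · rintro ⟨ξ, η, hz, hpsd⟩ w ⟨x, hx, rfl⟩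
    obtain ⟨rfl, rfl⟩ : ξ = z.re ∧ η = z.im := by simp [hz]
    exact (hunit x hx).1 (hpsd.dotProduct_mulVec_nonneg x)
end

section
/- Let H and K be d×d hermitian complex matrices and let p(ξ, η) = det(I − ξH − ηK). Then the spectrahedron {(ξ, η) ∈ ℝ² : I − ξH − ηK is positive semidefinite} equals the closure of the connected component containing the origin of the set {(ξ, η) ∈ ℝ² : p(ξ, η) > 0}. -/
/-!
Let `P` be the set where `I - ξH - ηK` is positive definite and `S` the spectrahedron. For
`I - M ⪰ 0` and `0 ≤ t < 1`, `I - tM = (1 - t)I + t(I - M)` is positive definite; hence `P` is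
star-shaped about the origin and every point of `S` is a limit of points of `P`, so `S` is the
closure of `P`. Positivity of the quadratic form on the compact unit sphere survives small
hermitian perturbations, so `P` is open. As a positive semidefinite matrix with nonzero
determinant is positive definite, the component of the origin in `{det > 0}` is covered by the
disjoint open sets `P` and `Sᶜ`, hence lies in the connected set `P`, which it contains.
-/

open Matrix Filter Topology Set
open scoped ComplexOrder

namespace Matrix

variable {n 𝕜 : Type*} [RCLike 𝕜]

theorem PosSemidef.posDef_one_sub_smul [DecidableEq n] {A : Matrix n n 𝕜}
    (hA : (1 - A).PosSemidef) {t : ℝ} (ht₀ : 0 ≤ t) (ht₁ : t < 1) : (1 - t • A).PosDef := by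
  have : 1 - t • A = (1 - t) • (1 : Matrix n n 𝕜) + t • (1 - A) := by module
  rw [this]
  exact (PosDef.one.smul (sub_pos.mpr ht₁)).add_posSemidef (hA.smul ht₀)

variable [Fintype n]

theorem isClosed_setOf_posSemidef : IsClosed {A : Matrix n n 𝕜 | A.PosSemidef} := by
  have : {A : Matrix n n 𝕜 | A.PosSemidef} =
      {A | Aᴴ = A} ∩ ⋂ x : n → 𝕜, {A | 0 ≤ star x ⬝ᵥ A *ᵥ x} := by
    ext A
    simp [posSemidef_iff_dotProduct_mulVec, IsHermitian]
  rw [this]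
  exact (isClosed_eq (by fun_prop) continuous_id).inter <|
    isClosed_iInter fun x => isClosed_le continuous_const (by fun_prop)

theorem PosDef.eventually_posDef_of_isHermitian {A : Matrix n n 𝕜} (hA : A.PosDef) :
    ∀ᶠ B in 𝓝 A, B.IsHermitian → B.PosDef := by
  have hunit : ∀ᶠ B in 𝓝 A, ∀ u ∈ Metric.sphere (0 : n → 𝕜) 1,
      0 < RCLike.re (star u ⬝ᵥ B *ᵥ u) := by
    refine (isCompact_sphere 0 1).eventually_forall_of_forall_eventually fun u hu => ?_
    have hpos : 0 < RCLike.re (star u ⬝ᵥ A *ᵥ u) :=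
      (RCLike.pos_iff.mp (hA.dotProduct_mulVec_pos (ne_zero_of_mem_unit_sphere ⟨u, hu⟩))).1
    exact (RCLike.continuous_re.comp (by fun_prop)).continuousAt.eventually (lt_mem_nhds hpos)
  filter_upwards [hunit] with B hB hBh
  refine .of_dotProduct_mulVec_pos hBh fun x hx => ?_
  have hx' : 0 < ‖x‖ := norm_pos_iff.mpr hx
  set u := ‖x‖⁻¹ • x
  have hu : u ∈ Metric.sphere (0 : n → 𝕜) 1 := by simp [u, norm_smul, hx'.ne']
  have hxu : x = ‖x‖ • u := by simp [u, smul_smul, hx'.ne']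
  have hq : star x ⬝ᵥ B *ᵥ x = (‖x‖ * ‖x‖) • (star u ⬝ᵥ B *ᵥ u) := by
    conv_lhs => rw [hxu]
    simp [star_smul, mulVec_smul, smul_dotProduct, dotProduct_smul, smul_smul]
  rw [hq]
  exact smul_pos (by positivity)
    (RCLike.pos_iff.mpr ⟨hB u hu, hBh.im_star_dotProduct_mulVec_self u⟩)

end Matrix

section Pencil

variable {n 𝕜 E : Type*} [DecidableEq n] [RCLike 𝕜]
  [AddCommGroup E] [Module ℝ E] [TopologicalSpace E] (L : E →L[ℝ] Matrix n n 𝕜)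

theorem starConvex_setOf_posDef_one_sub : StarConvex ℝ 0 {v | (1 - L v).PosDef} := by
  intro v hv a b ha hb hab
  rw [smul_zero, zero_add, mem_ofPred_eq, map_smul]
  rcases (show b ≤ 1 by linarith).lt_or_eq with hb₁ | rfl
  · exact hv.posSemidef.posDef_one_sub_smul hb hb₁
  · simpa using hv

variable [Fintype n]

theorem isClosed_setOf_posSemidef_one_sub : IsClosed {v | (1 - L v).PosSemidef} :=
  isClosed_setOf_posSemidef.preimage (by fun_prop)

theorem isOpen_setOf_posDef_one_sub (hL : ∀ v, (L v).IsHermitian) :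
    IsOpen {v | (1 - L v).PosDef} := by
  refine isOpen_iff_mem_nhds.mpr fun v hv => ?_
  have hcont : ContinuousAt (fun w => 1 - L w) v := by fun_prop
  filter_upwards [hcont.eventually hv.eventually_posDef_of_isHermitian] with w hw
  exact hw (isHermitian_one.sub (hL w))

variable [ContinuousSMul ℝ E]

theorem setOf_posSemidef_one_sub_eq_closure :
    {v | (1 - L v).PosSemidef} = closure {v | (1 - L v).PosDef} := by
  refine subset_antisymm (fun v hv => ?_) <|
    closure_minimal (fun v hv => hv.posSemidef) (isClosed_setOf_posSemidef_one_sub L)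
  have htend : Tendsto (fun t : ℝ => t • v) (𝓝[<] 1) (𝓝 v) :=
    ((continuous_id.smul continuous_const).tendsto' (1 : ℝ) v (one_smul ℝ v)).mono_left
      nhdsWithin_le_nhds
  refine mem_closure_of_tendsto htend ?_
  filter_upwards [Ioo_mem_nhdsLT one_pos] with t ht
  simpa [map_smul] using hv.posDef_one_sub_smul ht.1.le ht.2

variable [IsTopologicalAddGroup E]

theorem setOf_posDef_one_sub_eq_connectedComponentIn (hL : ∀ v, (L v).IsHermitian) :
    {v | (1 - L v).PosDef} = connectedComponentIn {v | 0 < (1 - L v).det} 0 := by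
  have h0 : (0 : E) ∈ {v | (1 - L v).PosDef} := by simpa using PosDef.one
  have hsub : {v | (1 - L v).PosDef} ⊆ {v | 0 < (1 - L v).det} := fun v hv => hv.det_pos
  refine subset_antisymm ?_ ?_
  · exact ((starConvex_setOf_posDef_one_sub L).isPathConnected h0).isConnected.isPreconnected
      |>.subset_connectedComponentIn h0 hsub
  · refine isPreconnected_connectedComponentIn.subset_left_of_subset_union
      (isOpen_setOf_posDef_one_sub L hL) (isClosed_setOf_posSemidef_one_sub L).isOpen_compl
      (disjoint_compl_right.mono_left fun v hv => hv.posSemidef) (fun v hv => ?_)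
      ⟨0, mem_connectedComponentIn (hsub h0), h0⟩
    by_cases hpsd : (1 - L v).PosSemidef
    · exact .inl (hpsd.posDef_iff_det_ne_zero.mpr (connectedComponentIn_subset _ _ hv).ne')
    · exact .inr hpsd

end Pencil

/-- For hermitian `H, K`, the spectrahedron
`{(ξ, η) ∈ ℝ² : I - ξH - ηK ⪰ 0}` equals the closure of the connected component
of the origin of `{(ξ, η) : det(I - ξH - ηK) > 0}` (the determinant being real
since the matrix is hermitian; `0 < det` is in the complex order). -/
theorem spectrahedron_eq_closure_connectedComponent {d : ℕ}
    (H K : Matrix (Fin d) (Fin d) ℂ) (hH : H.IsHermitian) (hK : K.IsHermitian) :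
    {v : ℝ × ℝ |
        ((1 : Matrix (Fin d) (Fin d) ℂ) - (v.1 : ℂ) • H - (v.2 : ℂ) • K).PosSemidef} =
      closure (connectedComponentIn
        {v : ℝ × ℝ |
          0 < ((1 : Matrix (Fin d) (Fin d) ℂ) - (v.1 : ℂ) • H - (v.2 : ℂ) • K).det}
        (0, 0)) := by
  let L : ℝ × ℝ →L[ℝ] Matrix (Fin d) (Fin d) ℂ :=
    (ContinuousLinearMap.fst ℝ ℝ ℝ).smulRight H + (ContinuousLinearMap.snd ℝ ℝ ℝ).smulRight K
  have hpencil : ∀ v : ℝ × ℝ, 1 - L v = 1 - (v.1 : ℂ) • H - (v.2 : ℂ) • K := fun v => by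
    simp [L, Complex.coe_smul, sub_sub]
  have hL : ∀ v, (L v).IsHermitian := fun v =>
    (hH.smul (IsSelfAdjoint.all v.1)).add (hK.smul (IsSelfAdjoint.all v.2))
  simp only [← hpencil, Prod.mk_zero_zero]
  rw [← setOf_posDef_one_sub_eq_connectedComponentIn L hL]
  exact setOf_posSemidef_one_sub_eq_closure L
end

section
/- Let A be a d×d complex matrix with hermitian decomposition A = H + iK. Then the numerical range W(A) has empty interior in ℂ if and only if the matrices I, H, K are linearly dependent over ℝ, which happens if and only if A = αR + βI for some hermitian matrix R and some α, β ∈ ℂ. -/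
open Matrix

/-!
By the Toeplitz–Hausdorff theorem the numerical range is convex, so it has empty interior iff it
lies on a real line `{z | ⟪v, z⟫_ℝ = e}` with `v ≠ 0`. For `A = H + iK` the real and imaginary
parts of `⟪x, A x⟫` are `⟪x, H x⟫` and `⟪x, K x⟫`, so this says that the quadratic form of
`v.re • H + v.im • K - e • 1` vanishes on the unit sphere, i.e. (by polarization)
`v.re • H + v.im • K = e • 1`. The two other conditions are rewordings of this relation.

Convexity: after an affine change of the operator, two points of the numerical range become
`0 = ⟪x, T x⟫` and `1 = ⟪y, T y⟫`. Turning `y` by a phase makes the form real along the segment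
`(1 - s) x + s y`, which avoids `0`, and the intermediate value theorem applied to the normalized
form along it fills `[0, 1]`.
-/

open scoped InnerProductSpace ComplexConjugate ComplexStarModule

section ConvexGeometry

variable {E : Type*} [NormedAddCommGroup E] [InnerProductSpace ℝ E]

theorem mem_orthogonal_vectorSpan_iff {s : Set E} {p : E} (hp : p ∈ s) (v : E) :
    v ∈ (vectorSpan ℝ s)ᗮ ↔ ∀ z ∈ s, ⟪v, z⟫_ℝ = ⟪v, p⟫_ℝ := by
  rw [vectorSpan_eq_span_vsub_set_right ℝ hp, ← Submodule.span_singleton_le_iff_mem,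
    ← Submodule.isOrtho_iff_le, Submodule.isOrtho_span]
  simp [inner_sub_right, sub_eq_zero]

theorem Convex.interior_eq_empty_iff_exists_inner_eq [FiniteDimensional ℝ E] [Nontrivial E]
    {s : Set E} (hs : Convex ℝ s) :
    interior s = ∅ ↔ ∃ v : E, v ≠ 0 ∧ ∃ e : ℝ, ∀ z ∈ s, ⟪v, z⟫_ℝ = e := by
  rcases s.eq_empty_or_nonempty with rfl | ⟨p, hp⟩
  · simpa using exists_ne (0 : E)
  rw [← Set.not_nonempty_iff_eq_empty, hs.interior_nonempty_iff_affineSpan_eq_top,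
    ← AffineSubspace.direction_eq_top_iff_of_nonempty ((affineSpan_nonempty ℝ).2 ⟨p, hp⟩),
    direction_affineSpan, ← Submodule.orthogonal_eq_bot_iff, ← ne_eq, Submodule.ne_bot_iff]
  refine exists_congr fun v => ?_
  rw [mem_orthogonal_vectorSpan_iff hp, and_comm]
  refine and_congr_right fun _ => ⟨fun h => ⟨_, h⟩, fun ⟨e, he⟩ z hz => ?_⟩
  rw [he z hz, he p hp]

end ConvexGeometry

theorem Complex.exists_norm_eq_one_im_mul_add_conj_mul_eq_zero (a b : ℂ) :
    ∃ μ : ℂ, ‖μ‖ = 1 ∧ (μ * a + conj μ * b).im = 0 := by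
  set w := a - conj b
  refine ⟨Complex.exp ((-w.arg : ℝ) * Complex.I), Complex.norm_exp_ofReal_mul_I _, ?_⟩
  set μ := Complex.exp ((-w.arg : ℝ) * Complex.I)
  -- `μ` rotates `w` onto the positive real axis
  have hμw : μ * w = ‖w‖ := by
    conv_lhs => rw [← Complex.norm_mul_exp_arg_mul_I w]
    rw [mul_left_comm, ← Complex.exp_add]
    push_cast
    simp
  have hsplit : μ * a + conj μ * b = μ * w + (μ * conj b + conj (μ * conj b)) := by
    simp only [w, map_mul, Complex.conj_conj]
    ring
  rw [hsplit, Complex.add_im, hμw, Complex.add_conj]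
  simp

namespace LinearMap

variable {V : Type*} [NormedAddCommGroup V] [InnerProductSpace ℂ V]

def numericalRange (T : V →ₗ[ℂ] V) : Set ℂ := {z | ∃ x, ‖x‖ = 1 ∧ ⟪x, T x⟫_ℂ = z}

variable {T : V →ₗ[ℂ] V}

theorem inner_apply_div_norm_sq_mem_numericalRange {x : V} (hx : x ≠ 0) :
    ⟪x, T x⟫_ℂ / (‖x‖ : ℂ) ^ 2 ∈ T.numericalRange := by
  refine ⟨(‖x‖⁻¹ : ℂ) • x, norm_smul_inv_norm hx, ?_⟩
  have : (‖x‖ : ℂ) ≠ 0 := by simpa using hx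
  simp only [map_smul, inner_smul_left, inner_smul_right, map_inv₀, Complex.conj_ofReal]
  field_simp

theorem smul_add_smul_one_mem_numericalRange {z : ℂ} (hz : z ∈ T.numericalRange) (a b : ℂ) :
    a * z + b ∈ (a • T + b • 1).numericalRange := by
  obtain ⟨x, hx, rfl⟩ := hz
  refine ⟨x, hx, ?_⟩
  simp [inner_self_eq_norm_sq_to_K, hx]

theorem numericalRange_subset_singleton_iff {c : ℂ} :
    T.numericalRange ⊆ {c} ↔ T = c • 1 := by
  constructor
  · intro h
    rw [← sub_eq_zero, ← inner_map_self_eq_zero]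
    intro x
    rcases eq_or_ne x 0 with rfl | hx
    · simp
    have hc := h (inner_apply_div_norm_sq_mem_numericalRange (T := T) hx)
    have : (‖x‖ : ℂ) ≠ 0 := by simpa using hx
    rw [Set.mem_singleton_iff, div_eq_iff (pow_ne_zero 2 this)] at hc
    rw [← inner_conj_symm, sub_apply, inner_sub_right, hc]
    simp [inner_smul_right, inner_self_eq_norm_sq_to_K]
  · rintro rfl _ ⟨x, hx, rfl⟩
    simp [inner_self_eq_norm_sq_to_K, hx]

theorem ofReal_mem_numericalRange_of_im_inner_add_inner_eq_zero {x y : V} (hx : ‖x‖ = 1)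
    (hy : ‖y‖ = 1) (hx₀ : ⟪x, T x⟫_ℂ = 0) (hy₁ : ⟪y, T y⟫_ℂ = 1)
    (hxy : (⟪x, T y⟫_ℂ + ⟪y, T x⟫_ℂ).im = 0) {t : ℝ} (ht : t ∈ Set.Icc (0 : ℝ) 1) :
    (t : ℂ) ∈ T.numericalRange := by
  set r := (⟪x, T y⟫_ℂ + ⟪y, T x⟫_ℂ).re
  have hr : ⟪x, T y⟫_ℂ + ⟪y, T x⟫_ℂ = r := Complex.ext rfl hxy
  have hli : LinearIndependent ℂ ![x, y] := by
    refine (LinearIndependent.pair_iff' (by rintro rfl; simp at hx)).2 fun a hax => ?_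
    rw [← hax] at hy₁
    simp [hx₀] at hy₁
  set p : ℝ → V := fun s => ((1 - s : ℝ) : ℂ) • x + (s : ℂ) • y
  have hp : ∀ s, p s ≠ 0 := fun s hs => by
    have := LinearIndependent.pair_iff.1 hli _ _ hs
    simp only [Complex.ofReal_eq_zero, sub_eq_zero] at this
    linarith [this.1, this.2]
  have hTp : ∀ s, ⟪p s, T (p s)⟫_ℂ = ((s ^ 2 + s * (1 - s) * r : ℝ) : ℂ) := fun s => by
    simp only [p, map_add, map_smul, inner_add_left, inner_add_right, inner_smul_left,
      inner_smul_right, Complex.conj_ofReal, hx₀, hy₁]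
    push_cast
    linear_combination ((1 - s) * s : ℂ) * hr
  set g : ℝ → ℝ := fun s => (s ^ 2 + s * (1 - s) * r) / ‖p s‖ ^ 2
  have hg : Continuous g :=
    Continuous.div (by fun_prop) (by fun_prop) fun s => pow_ne_zero 2 (norm_ne_zero_iff.2 (hp s))
  obtain ⟨s, -, hs⟩ : ∃ s ∈ Set.Icc (0 : ℝ) 1, g s = t :=
    intermediate_value_Icc zero_le_one hg.continuousOn (by simpa [g, p, hx, hy] using ht)
  have := inner_apply_div_norm_sq_mem_numericalRange (T := T) (hp s)
  rw [hTp, ← Complex.ofReal_pow, ← Complex.ofReal_div] at this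
  exact hs ▸ this

theorem ofReal_mem_numericalRange_of_zero_mem_of_one_mem (h₀ : 0 ∈ T.numericalRange)
    (h₁ : 1 ∈ T.numericalRange) {t : ℝ} (ht : t ∈ Set.Icc (0 : ℝ) 1) :
    (t : ℂ) ∈ T.numericalRange := by
  obtain ⟨x, hx, hx₀⟩ := h₀
  obtain ⟨y, hy, hy₁⟩ := h₁
  obtain ⟨μ, hμ, hμim⟩ :=
    Complex.exists_norm_eq_one_im_mul_add_conj_mul_eq_zero ⟪x, T y⟫_ℂ ⟪y, T x⟫_ℂ
  have hμμ : conj μ * μ = 1 := by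
    rw [← Complex.normSq_eq_conj_mul_self, Complex.normSq_eq_norm_sq, hμ, one_pow,
      Complex.ofReal_one]
  refine ofReal_mem_numericalRange_of_im_inner_add_inner_eq_zero hx
    (y := μ • y) (by rw [norm_smul, hμ, hy, one_mul]) hx₀ ?_ ?_ ht
  · simp only [map_smul, inner_smul_left, inner_smul_right, hy₁]
    linear_combination hμμ
  · simpa only [map_smul, inner_smul_left, inner_smul_right] using hμim

theorem convex_numericalRange (T : V →ₗ[ℂ] V) : Convex ℝ T.numericalRange := by
  intro z₁ hz₁ z₂ hz₂ a b ha hb hab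
  rcases eq_or_ne z₁ z₂ with rfl | hne
  · rwa [Convex.combo_self hab]
  have hγ : z₂ - z₁ ≠ 0 := sub_ne_zero.2 hne.symm
  set B := (z₂ - z₁)⁻¹ • T + (-(z₂ - z₁)⁻¹ * z₁) • 1
  have h₀ : 0 ∈ B.numericalRange := by
    convert smul_add_smul_one_mem_numericalRange hz₁ (z₂ - z₁)⁻¹ (-(z₂ - z₁)⁻¹ * z₁) using 1
    ring
  have h₁ : 1 ∈ B.numericalRange := by
    convert smul_add_smul_one_mem_numericalRange hz₂ (z₂ - z₁)⁻¹ (-(z₂ - z₁)⁻¹ * z₁) using 1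
    field_simp
    ring
  have hT : (z₂ - z₁) • B + z₁ • 1 = T := by
    match_scalars <;> field_simp
    ring
  have hB := smul_add_smul_one_mem_numericalRange
    (ofReal_mem_numericalRange_of_zero_mem_of_one_mem h₀ h₁ ⟨hb, by linarith⟩) (z₂ - z₁) z₁
  rw [hT] at hB
  convert hB using 1
  rw [eq_sub_of_add_eq hab]
  simp only [Complex.real_smul, Complex.ofReal_sub, Complex.ofReal_one]
  ring

theorem forall_mem_numericalRange_inner_eq_iff {S R : V →ₗ[ℂ] V} (hS : S.IsSymmetric)
    (hR : R.IsSymmetric) (v : ℂ) (e : ℝ) :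
    (∀ z ∈ (S + Complex.I • R).numericalRange, ⟪v, z⟫_ℝ = e) ↔
      v.re • S + v.im • R = e • 1 := by
  have key : ∀ x, ⟪x, (v.re • S + v.im • R) x⟫_ℂ = ⟪v, ⟪x, (S + Complex.I • R) x⟫_ℂ⟫_ℝ := by
    intro x
    obtain ⟨a, ha⟩ : ∃ a : ℝ, ⟪x, S x⟫_ℂ = a := ⟨_, (hS.coe_re_inner_self_apply x).symm⟩
    obtain ⟨b, hb⟩ : ∃ b : ℝ, ⟪x, R x⟫_ℂ = b := ⟨_, (hR.coe_re_inner_self_apply x).symm⟩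
    simp [inner_add_right, ← Complex.coe_smul, ha, hb, Complex.inner]
    ring
  rw [← Complex.coe_smul e (1 : V →ₗ[ℂ] V), ← numericalRange_subset_singleton_iff]
  constructor
  · rintro h _ ⟨x, hx, rfl⟩
    rw [Set.mem_singleton_iff, key, h _ ⟨x, hx, rfl⟩]
  · rintro h _ ⟨x, hx, rfl⟩
    have := h ⟨x, hx, rfl⟩
    rw [Set.mem_singleton_iff, key] at this
    exact_mod_cast this

theorem interior_numericalRange_eq_empty_iff {S R : V →ₗ[ℂ] V} (hS : S.IsSymmetric)
    (hR : R.IsSymmetric) :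
    interior (S + Complex.I • R).numericalRange = ∅ ↔
      ∃ v : ℂ, v ≠ 0 ∧ ∃ e : ℝ, v.re • S + v.im • R = e • 1 := by
  simp_rw [(convex_numericalRange _).interior_eq_empty_iff_exists_inner_eq,
    forall_mem_numericalRange_inner_eq_iff hS hR]

end LinearMap

theorem Matrix.numericalRange_toEuclideanLin {d : ℕ} (A : Matrix (Fin d) (Fin d) ℂ) :
    (toEuclideanLin A).numericalRange = numericalRange A := by
  ext z
  simp only [LinearMap.numericalRange, numericalRange, Set.mem_ofPred_eq]
  refine (WithLp.equiv 2 (Fin d → ℂ)).exists_congr_left.trans (exists_congr fun x => ?_)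
  have hnorm : star x ⬝ᵥ x = 1 ↔ ‖WithLp.toLp 2 x‖ = 1 := by
    have := inner_self_eq_norm_sq_to_K (𝕜 := ℂ) (WithLp.toLp 2 x)
    rw [EuclideanSpace.inner_toLp_toLp, dotProduct_comm] at this
    rw [this, ← RCLike.ofReal_pow, ← RCLike.ofReal_one, RCLike.ofReal_inj,
      pow_eq_one_iff_of_nonneg (norm_nonneg _) two_ne_zero]
  rw [hnorm, WithLp.equiv_symm_apply, toLpLin_toLp, toLin'_apply,
    EuclideanSpace.inner_toLp_toLp, dotProduct_comm]

theorem not_linearIndependent_one_iff {M : Type*} [Ring M] [Module ℝ M] {b c : M} :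
    ¬ LinearIndependent ℝ ![1, b, c] ↔ ∃ v : ℂ, v ≠ 0 ∧ ∃ e : ℝ, v.re • b + v.im • c = e • 1 := by
  rw [Fintype.not_linearIndependent_iff]
  constructor
  · rintro ⟨g, hg, i, hi⟩
    simp only [Fin.sum_univ_three, Matrix.cons_val_zero, Matrix.cons_val_one,
      Matrix.cons_val_two, Matrix.head_cons, Matrix.tail_cons] at hg
    by_cases h : g 1 = 0 ∧ g 2 = 0
    · have hg₀ : g 0 ≠ 0 := by fin_cases i <;> simp_all
      rw [h.1, h.2, zero_smul, zero_smul, add_zero, add_zero, smul_eq_zero] at hg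
      have := subsingleton_of_zero_eq_one (hg.resolve_left hg₀).symm
      exact ⟨1, one_ne_zero, 0, Subsingleton.elim _ _⟩
    · refine ⟨⟨g 1, g 2⟩, fun hv => h ⟨congrArg Complex.re hv, congrArg Complex.im hv⟩, -g 0, ?_⟩
      rw [neg_smul, eq_neg_iff_add_eq_zero, add_comm, ← add_assoc]
      exact hg
  · rintro ⟨v, hv, e, h⟩
    refine ⟨![-e, v.re, v.im], ?_, ?_⟩
    · simp [Fin.sum_univ_three, add_assoc, h]
    · by_contra! h0
      exact hv (Complex.ext (by simpa using h0 1) (by simpa using h0 2))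

theorem IsSelfAdjoint.add_I_smul_eq_add_I_smul_iff {M : Type*} [AddCommGroup M] [Module ℂ M]
    [StarAddMonoid M] [StarModule ℂ M] {a b c d : M} (ha : IsSelfAdjoint a)
    (hb : IsSelfAdjoint b) (hc : IsSelfAdjoint c) (hd : IsSelfAdjoint d) :
    a + Complex.I • b = c + Complex.I • d ↔ a = c ∧ b = d := by
  refine ⟨fun h => ⟨?_, ?_⟩, fun h => h.1 ▸ h.2 ▸ rfl⟩
  · simpa [ha.coe_realPart, hb.imaginaryPart, hc.coe_realPart, hd.imaginaryPart] using
      congrArg (fun x => (ℜ x : M)) h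
  · simpa [ha.imaginaryPart, hb.coe_realPart, hc.imaginaryPart, hd.coe_realPart] using
      congrArg (fun x => (ℑ x : M)) h

theorem Matrix.exists_isHermitian_smul_add_smul_one_iff {n : Type*} [DecidableEq n]
    {H K : Matrix n n ℂ} (hH : H.IsHermitian) (hK : K.IsHermitian) :
    (∃ v : ℂ, v ≠ 0 ∧ ∃ e : ℝ, v.re • H + v.im • K = e • 1) ↔
      ∃ R : Matrix n n ℂ, R.IsHermitian ∧ ∃ α β : ℂ, H + Complex.I • K = α • R + β • 1 := by
  constructor
  · rintro ⟨v, hv, e, h⟩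
    have hw : (v.re : ℂ) - Complex.I * v.im ≠ 0 := by
      rw [show (v.re : ℂ) - Complex.I * v.im = conj v by apply Complex.ext <;> simp]
      exact (map_ne_zero _).2 hv
    -- `conj v • (H + I • K) = (v.re • H + v.im • K) + I • (v.re • K - v.im • H)`
    refine ⟨v.re • K - v.im • H, (hK.smul (.all _)).sub (hH.smul (.all _)),
      Complex.I / (v.re - Complex.I * v.im), e / (v.re - Complex.I * v.im), ?_⟩
    linear_combination (norm := skip) (1 / ((v.re : ℂ) - Complex.I * v.im)) • h
    match_scalars <;> field_simp <;> ring_nf <;> simp [Complex.I_sq]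
  · rintro ⟨R, hR, α, β, hAR⟩
    have h1 : (1 : Matrix n n ℂ).IsHermitian := isHermitian_one
    have hdecomp : α • R + β • 1 = (α.re • R + β.re • 1) + Complex.I • (α.im • R + β.im • 1) := by
      conv_lhs => rw [← Complex.re_add_im α, ← Complex.re_add_im β]
      module
    rw [hdecomp, IsSelfAdjoint.add_I_smul_eq_add_I_smul_iff hH hK
      ((hR.smul (.all _)).add (h1.smul (.all _))) ((hR.smul (.all _)).add (h1.smul (.all _)))]
      at hAR
    obtain ⟨rfl, rfl⟩ := hAR
    rcases eq_or_ne α 0 with rfl | hα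
    · exact ⟨1, one_ne_zero, β.re, by simp⟩
    · refine ⟨Complex.I * α, mul_ne_zero Complex.I_ne_zero hα, α.re * β.im - α.im * β.re, ?_⟩
      simp only [Complex.mul_re, Complex.mul_im, Complex.I_re, Complex.I_im]
      module

theorem Matrix.interior_numericalRange_add_I_smul_eq_empty_iff {d : ℕ}
    {H K : Matrix (Fin d) (Fin d) ℂ} (hH : H.IsHermitian) (hK : K.IsHermitian) :
    interior (numericalRange (H + Complex.I • K)) = ∅ ↔
      ∃ v : ℂ, v ≠ 0 ∧ ∃ e : ℝ, v.re • H + v.im • K = e • 1 := by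
  rw [← numericalRange_toEuclideanLin, map_add, map_smul,
    LinearMap.interior_numericalRange_eq_empty_iff (isSymmetric_toEuclideanLin_iff.2 hH)
      (isSymmetric_toEuclideanLin_iff.2 hK)]
  refine exists_congr fun v => and_congr_right fun _ => exists_congr fun e => ?_
  rw [← (toEuclideanLin (𝕜 := ℂ) (m := Fin d) (n := Fin d)).injective.eq_iff, map_add,
    LinearMapClass.map_smul_of_tower, LinearMapClass.map_smul_of_tower,
    LinearMapClass.map_smul_of_tower, toLpLin_one, Module.End.one_eq_id]

/-- For `A = H + iK` with `H, K` hermitian, the numerical range `W(A)` has empty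
interior in `ℂ` iff `I, H, K` are linearly dependent over `ℝ`, iff
`A = αR + βI` for some hermitian `R` and `α, β ∈ ℂ`. -/
theorem numericalRange_empty_interior_iff {d : ℕ} (A H K : Matrix (Fin d) (Fin d) ℂ)
    (hH : H.IsHermitian) (hK : K.IsHermitian) (hA : A = H + Complex.I • K) :
    (interior (numericalRange A) = ∅ ↔
      ¬ LinearIndependent ℝ ![(1 : Matrix (Fin d) (Fin d) ℂ), H, K]) ∧
    (interior (numericalRange A) = ∅ ↔
      ∃ R : Matrix (Fin d) (Fin d) ℂ, R.IsHermitian ∧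
        ∃ α β : ℂ, A = α • R + β • (1 : Matrix (Fin d) (Fin d) ℂ)) := by
  subst hA
  have h := interior_numericalRange_add_I_smul_eq_empty_iff hH hK
  exact ⟨h.trans not_linearIndependent_one_iff.symm,
    h.trans (exists_isHermitian_smul_add_smul_one_iff hH hK)⟩
end
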